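/- arXiv:1506.04163 — 5 statements merged into one kernel-verified Lean document; each statement's English description precedes it below -/
import Mathlib

section
/- Let X be a Hilbert space, A : X → X a bounded skew-adjoint operator, B : X → X a bounded self-adjoint nonnegative operator, and T > 0. Let z : [0,T] → X solve z' + Az + Bz = 0 and φ : [0,T] → X solve φ' + Aφ = 0 with φ(0) = z(0). Then ∫₀ᵀ ‖B^{1/2} φ(t)‖² dt ≤ (8T²‖B^{1/2}‖⁴ + 2) ∫₀ᵀ ‖B^{1/2} z(t)‖² dt. -/
/-!
Put `θ = φ - z`, so that `θ' + Aθ = Bz` and `θ(0) = 0`. Skew-adjointness of `A` gives the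
energy identity `(‖θ‖²)' = 2⟪Bz, θ⟫ = 2⟪B^{1/2}z, B^{1/2}θ⟫`, hence
`‖θ(t)‖² ≤ 2 ∫₀ᵀ |⟪B^{1/2}z, B^{1/2}θ⟫|` for all `t`. Integrating `‖B^{1/2}θ‖² ≤ ‖B^{1/2}‖² ‖θ‖²`
and applying Young's inequality absorbs half of `∫ ‖B^{1/2}θ‖²` into the left-hand side, so
`∫ ‖B^{1/2}θ‖² ≤ 4T²‖B^{1/2}‖⁴ ∫ ‖B^{1/2}z‖²`; finally `‖B^{1/2}φ‖² ≤ 2‖B^{1/2}z‖² + 2‖B^{1/2}θ‖²`.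
-/

open RealInnerProductSpace Set intervalIntegral
open scoped Interval
open MeasureTheory (volume)

theorem sub_le_integral_abs_of_hasDerivAt {f f' : ℝ → ℝ} {a b t : ℝ}
    (hf : ∀ s ∈ Icc a b, HasDerivAt f (f' s) s) (hf' : ContinuousOn f' (Icc a b))
    (ht : t ∈ Icc a b) :
    f t - f a ≤ ∫ s in a..b, |f' s| := by
  have hsub : Icc a t ⊆ Icc a b := Icc_subset_Icc le_rfl ht.2
  calc f t - f a = ∫ s in a..t, f' s := by
        refine (integral_eq_sub_of_hasDerivAt (fun s hs => hf s (hsub ?_))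
          ((hf'.mono hsub).intervalIntegrable_of_Icc ht.1)).symm
        rwa [uIcc_of_le ht.1] at hs
    _ ≤ ∫ s in a..t, |f' s| := (le_abs_self _).trans (abs_integral_le_integral_abs ht.1)
    _ ≤ ∫ s in a..b, |f' s| :=
        integral_mono_interval le_rfl ht.1 ht.2 (MeasureTheory.ae_of_all _ fun _ => abs_nonneg _)
          (hf'.abs.intervalIntegrable_of_Icc (ht.1.trans ht.2))

section NormedSpace

variable {𝕜 E F : Type*} [NontriviallyNormedField 𝕜] [NormedAddCommGroup E] [NormedSpace 𝕜 E]
  [NormedAddCommGroup F] [NormedSpace 𝕜 F]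

theorem integral_norm_add_sq_le {u v : ℝ → E} {a b : ℝ} (hab : a ≤ b)
    (hu : ContinuousOn u (Icc a b)) (hv : ContinuousOn v (Icc a b)) :
    ∫ t in a..b, ‖u t + v t‖ ^ 2 ≤
      2 * (∫ t in a..b, ‖u t‖ ^ 2) + 2 * ∫ t in a..b, ‖v t‖ ^ 2 := by
  have hu2 : IntervalIntegrable (fun t => ‖u t‖ ^ 2) volume a b :=
    (hu.norm.pow 2).intervalIntegrable_of_Icc hab
  have hv2 : IntervalIntegrable (fun t => ‖v t‖ ^ 2) volume a b :=
    (hv.norm.pow 2).intervalIntegrable_of_Icc hab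
  calc ∫ t in a..b, ‖u t + v t‖ ^ 2 ≤ ∫ t in a..b, (2 * ‖u t‖ ^ 2 + 2 * ‖v t‖ ^ 2) := by
        refine integral_mono_on hab (((hu.add hv).norm.pow 2).intervalIntegrable_of_Icc hab)
          ((hu2.const_mul _).add (hv2.const_mul _)) fun t _ => ?_
        nlinarith [norm_add_le (u t) (v t), norm_nonneg (u t + v t), norm_nonneg (u t),
          norm_nonneg (v t), two_mul_le_add_sq ‖u t‖ ‖v t‖]
    _ = _ := by rw [integral_add (hu2.const_mul _) (hv2.const_mul _), integral_const_mul,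
          integral_const_mul]

theorem integral_norm_sq_apply_le {S : E →L[𝕜] F} {θ : ℝ → E} {a b C : ℝ} (hab : a ≤ b)
    (hθ : ∀ t ∈ Icc a b, ‖θ t‖ ^ 2 ≤ C) :
    ∫ t in a..b, ‖S (θ t)‖ ^ 2 ≤ (b - a) * (‖S‖ ^ 2 * C) := by
  have hbound : ∀ t ∈ Ι a b, ‖‖S (θ t)‖ ^ 2‖ ≤ ‖S‖ ^ 2 * C := by
    intro t ht
    have ht' : t ∈ Icc a b := Ioc_subset_Icc_self (by rwa [uIoc_of_le hab] at ht)
    rw [Real.norm_of_nonneg (by positivity)]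
    calc ‖S (θ t)‖ ^ 2 ≤ (‖S‖ * ‖θ t‖) ^ 2 := by gcongr; exact S.le_opNorm _
      _ = ‖S‖ ^ 2 * ‖θ t‖ ^ 2 := mul_pow _ _ _
      _ ≤ ‖S‖ ^ 2 * C := by gcongr; exact hθ t ht'
  have h := (le_abs_self _).trans (norm_integral_le_of_norm_le_const hbound)
  rwa [abs_of_nonneg (sub_nonneg.2 hab), mul_comm] at h

end NormedSpace

section InnerProductSpace

variable {X : Type*} [NormedAddCommGroup X] [InnerProductSpace ℝ X]

theorem inner_apply_eq_inner_apply_of_norm_sq_eq {B S : X →L[ℝ] X}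
    (hB : ∀ x y, ⟪B x, y⟫ = ⟪x, B y⟫) (hS : ∀ x, ‖S x‖ ^ 2 = ⟪B x, x⟫) (x y : X) :
    ⟪B x, y⟫ = ⟪S x, S y⟫ := by
  have hxy := hS (x + y)
  rw [map_add, ← real_inner_self_eq_norm_sq, real_inner_add_add_self, real_inner_self_eq_norm_sq,
    real_inner_self_eq_norm_sq, hS x, hS y] at hxy
  simp only [map_add, inner_add_left, inner_add_right, hB y x, real_inner_comm (B x) y] at hxy
  linarith

theorem hasDerivAt_norm_sq_of_inner_self_eq_zero {A : X →L[ℝ] X} (hA : ∀ x, ⟪A x, x⟫ = 0)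
    {θ : ℝ → X} {w : X} {t : ℝ} (hθ : HasDerivAt θ (-A (θ t) + w) t) :
    HasDerivAt (‖θ ·‖ ^ 2) (2 * ⟪θ t, w⟫) t := by
  have h := hθ.norm_sq
  rwa [inner_add_right, inner_neg_right, real_inner_comm (A (θ t)), hA, neg_zero, zero_add] at h

theorem norm_sq_le_two_mul_integral_abs_inner {A : X →L[ℝ] X} (hA : ∀ x, ⟪A x, x⟫ = 0)
    {θ w : ℝ → X} {a b t : ℝ} (hθ : ∀ s ∈ Icc a b, HasDerivAt θ (-A (θ s) + w s) s)
    (hw : ContinuousOn w (Icc a b)) (ha : θ a = 0) (ht : t ∈ Icc a b) :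
    ‖θ t‖ ^ 2 ≤ 2 * ∫ s in a..b, |⟪θ s, w s⟫| := by
  have hθc : ContinuousOn θ (Icc a b) := fun s hs => (hθ s hs).continuousAt.continuousWithinAt
  have h := sub_le_integral_abs_of_hasDerivAt
    (fun s hs => hasDerivAt_norm_sq_of_inner_self_eq_zero hA (hθ s hs))
    (continuousOn_const.mul (hθc.inner hw)) ht
  simpa [ha, abs_mul, integral_const_mul] using h

variable {u v : ℝ → X} {a b : ℝ}

theorem integral_abs_inner_le (hab : a ≤ b) (hu : ContinuousOn u (Icc a b))
    (hv : ContinuousOn v (Icc a b)) (c : ℝ) :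
    c * ∫ t in a..b, |⟪u t, v t⟫| ≤
      c ^ 2 / 2 * (∫ t in a..b, ‖u t‖ ^ 2) + (∫ t in a..b, ‖v t‖ ^ 2) / 2 := by
  have hu2 : IntervalIntegrable (fun t => ‖u t‖ ^ 2) volume a b :=
    (hu.norm.pow 2).intervalIntegrable_of_Icc hab
  have hv2 : IntervalIntegrable (fun t => ‖v t‖ ^ 2) volume a b :=
    (hv.norm.pow 2).intervalIntegrable_of_Icc hab
  calc c * ∫ t in a..b, |⟪u t, v t⟫| = ∫ t in a..b, c * |⟪u t, v t⟫| :=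
        (integral_const_mul _ _).symm
    _ ≤ ∫ t in a..b, (c ^ 2 / 2 * ‖u t‖ ^ 2 + ‖v t‖ ^ 2 / 2) := by
        refine integral_mono_on hab
          (((hu.inner hv).abs.intervalIntegrable_of_Icc hab).const_mul c)
          ((hu2.const_mul _).add (hv2.div_const _)) fun t _ => ?_
        calc c * |⟪u t, v t⟫| ≤ |c| * (‖u t‖ * ‖v t‖) :=
              mul_le_mul (le_abs_self c) (abs_real_inner_le_norm _ _) (abs_nonneg _) (abs_nonneg c)
          _ ≤ _ := by nlinarith [two_mul_le_add_sq (|c| * ‖u t‖) ‖v t‖, sq_abs c]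
    _ = _ := by rw [integral_add (hu2.const_mul _) (hv2.div_const _), integral_const_mul,
          integral_div]

end InnerProductSpace

theorem stmt1_general {X : Type*} [NormedAddCommGroup X] [InnerProductSpace ℝ X]
    (A B sqrtB : X →L[ℝ] X) (T : ℝ) (hT : 0 < T)
    (hA : ∀ x : X, ⟪A x, x⟫ = 0)
    (hBsa : ∀ x y : X, ⟪B x, y⟫ = ⟪x, B y⟫)
    (hsqrtB : ∀ x : X, ‖sqrtB x‖ ^ 2 = ⟪B x, x⟫)
    (z φ : ℝ → X)
    (hz : ∀ t ∈ Set.Icc (0:ℝ) T, HasDerivAt z (-(A (z t)) - B (z t)) t)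
    (hφ : ∀ t ∈ Set.Icc (0:ℝ) T, HasDerivAt φ (-(A (φ t))) t)
    (h0 : φ 0 = z 0) :
    (∫ t in (0:ℝ)..T, ‖sqrtB (φ t)‖ ^ 2) ≤
      (8 * T ^ 2 * ‖sqrtB‖ ^ 4 + 2) * ∫ t in (0:ℝ)..T, ‖sqrtB (z t)‖ ^ 2 := by
  set θ : ℝ → X := fun t => φ t - z t
  have hθ : ∀ t ∈ Icc 0 T, HasDerivAt θ (-A (θ t) + B (z t)) t := fun t ht =>
    ((hφ t ht).sub (hz t ht)).congr_deriv (by simp only [θ, map_sub]; abel)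
  have hzc : ContinuousOn z (Icc 0 T) := fun t ht => (hz t ht).continuousAt.continuousWithinAt
  have hθc : ContinuousOn θ (Icc 0 T) := fun t ht => (hθ t ht).continuousAt.continuousWithinAt
  have hinner : ∀ s, ⟪θ s, B (z s)⟫ = ⟪sqrtB (z s), sqrtB (θ s)⟫ := fun s => by
    rw [real_inner_comm, inner_apply_eq_inner_apply_of_norm_sq_eq hBsa hsqrtB]
  have henergy : ∀ t ∈ Icc 0 T,
      ‖θ t‖ ^ 2 ≤ 2 * ∫ s in 0..T, |⟪sqrtB (z s), sqrtB (θ s)⟫| := fun t ht => by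
    simpa only [hinner] using norm_sq_le_two_mul_integral_abs_inner hA hθ
      (B.continuous.comp_continuousOn hzc) (by simp [θ, h0]) ht
  have hSz : ContinuousOn (fun t => sqrtB (z t)) (Icc 0 T) :=
    sqrtB.continuous.comp_continuousOn hzc
  have hSθ : ContinuousOn (fun t => sqrtB (θ t)) (Icc 0 T) :=
    sqrtB.continuous.comp_continuousOn hθc
  have hθbound := integral_norm_sq_apply_le (S := sqrtB) hT.le henergy
  have hyoung := integral_abs_inner_le hT.le hSz hSθ (2 * T * ‖sqrtB‖ ^ 2)
  have habsorb : ∫ t in 0..T, ‖sqrtB (θ t)‖ ^ 2 ≤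
      4 * T ^ 2 * ‖sqrtB‖ ^ 4 * ∫ t in 0..T, ‖sqrtB (z t)‖ ^ 2 := by
    linarith
  have hsplit := integral_norm_add_sq_le hT.le hSz hSθ
  simp only [θ, ← map_add, add_sub_cancel] at hsplit
  linarith

theorem stmt1 {X : Type*} [NormedAddCommGroup X] [InnerProductSpace ℝ X] [CompleteSpace X]
    (A B sqrtB : X →L[ℝ] X) (T : ℝ) (hT : 0 < T)
    (hA : ∀ x : X, ⟪A x, x⟫ = 0)
    (hBsa : ∀ x y : X, ⟪B x, y⟫ = ⟪x, B y⟫)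
    (hBnn : ∀ x : X, 0 ≤ ⟪B x, x⟫)
    (hsqrtB : ∀ x : X, ‖sqrtB x‖ ^ 2 = ⟪B x, x⟫)
    (z φ : ℝ → X)
    (hz : ∀ t ∈ Set.Icc (0:ℝ) T, HasDerivAt z (-(A (z t)) - B (z t)) t)
    (hφ : ∀ t ∈ Set.Icc (0:ℝ) T, HasDerivAt φ (-(A (φ t))) t)
    (h0 : φ 0 = z 0) :
    (∫ t in (0:ℝ)..T, ‖sqrtB (φ t)‖ ^ 2) ≤
      (8 * T ^ 2 * ‖sqrtB‖ ^ 4 + 2) * ∫ t in (0:ℝ)..T, ‖sqrtB (z t)‖ ^ 2 :=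
  stmt1_general A B sqrtB T hT hA hBsa hsqrtB z φ hz hφ h0
end

section
/- Let X be a finite-dimensional Hilbert space, A : X → X skew-adjoint, B : X → X self-adjoint nonnegative, F : X → X a map, V : X → X a positive self-adjoint operator, and Δt > 0. Suppose (u^k), (ũ^k) in X satisfy the implicit midpoint scheme with viscosity: (ũ^{k+1} − u^k)/Δt + A((u^k + ũ^{k+1})/2) + B F((u^k + ũ^{k+1})/2) = 0 and (ũ^{k+1} − u^{k+1})/Δt = V u^{k+1}. Define E_k = (1/2)‖u^k‖². Then for every k, E_{k+1} − E_k = −Δt ⟨B m_k, F(m_k)⟩ − Δt ‖V^{1/2} u^{k+1}‖² − (Δt²/2) ‖V u^{k+1}‖², where m_k = (u^k + ũ^{k+1})/2. -/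
open RealInnerProductSpace

section EnergyIdentities

variable {X : Type*} [NormedAddCommGroup X] [InnerProductSpace ℝ X]

theorem real_inner_sub_half_smul_add (a b : X) :
    ⟪b - a, (1/2 : ℝ) • (a + b)⟫ = 1/2 * ‖b‖ ^ 2 - 1/2 * ‖a‖ ^ 2 := by
  rw [real_inner_smul_right, inner_sub_left, inner_add_right, inner_add_right,
    real_inner_self_eq_norm_sq, real_inner_self_eq_norm_sq, real_inner_comm a b]
  ring

/-- Pairing the step with the midpoint `m` turns `w - v` into the energy difference and kills
the skew part `⟪A m, m⟫`. -/
theorem half_norm_sq_sub_of_midpoint_step {A B : X → X} (F : X → X) {Δt : ℝ} (hΔt : Δt ≠ 0)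
    (hA : ∀ x, ⟪A x, x⟫ = 0) (hB : ∀ x y, ⟪B x, y⟫ = ⟪x, B y⟫) {v w : X}
    (h : Δt⁻¹ • (w - v) + A ((1/2 : ℝ) • (v + w)) + B (F ((1/2 : ℝ) • (v + w))) = 0) :
    1/2 * ‖w‖ ^ 2 - 1/2 * ‖v‖ ^ 2 =
      -Δt * ⟪B ((1/2 : ℝ) • (v + w)), F ((1/2 : ℝ) • (v + w))⟫ := by
  set m : X := (1/2 : ℝ) • (v + w)
  have hstep : w - v = Δt • -(A m + B (F m)) := by
    rw [← inv_smul_eq_iff₀ hΔt, ← add_eq_zero_iff_eq_neg, ← add_assoc, h]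
  rw [← real_inner_sub_half_smul_add, hstep, real_inner_smul_left, inner_neg_left,
    inner_add_left, hA, hB, real_inner_comm]
  ring

theorem half_norm_sq_of_viscosity_step (V : X → X) {Δt : ℝ} (hΔt : Δt ≠ 0) {u w : X}
    (h : Δt⁻¹ • (w - u) = V u) :
    1/2 * ‖w‖ ^ 2 = 1/2 * ‖u‖ ^ 2 + Δt * ⟪V u, u⟫ + Δt ^ 2 / 2 * ‖V u‖ ^ 2 := by
  have hw : w = u + Δt • V u := by
    rw [inv_smul_eq_iff₀ hΔt, sub_eq_iff_eq_add'] at h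
    exact h
  rw [hw, norm_add_sq_real, norm_smul, real_inner_smul_right, real_inner_comm,
    Real.norm_eq_abs, mul_pow, sq_abs]
  ring

end EnergyIdentities

theorem stmt11_general {X : Type*} [NormedAddCommGroup X] [InnerProductSpace ℝ X]
    (A B V sqrtV : X →L[ℝ] X) (F : X → X) (Δt : ℝ) (hΔt : 0 < Δt)
    (hA : ∀ x : X, ⟪A x, x⟫ = 0)
    (hBsa : ∀ x y : X, ⟪B x, y⟫ = ⟪x, B y⟫)
    (hsqrtV : ∀ x : X, ‖sqrtV x‖ ^ 2 = ⟪V x, x⟫)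
    (u ut : ℕ → X)
    (hscheme1 : ∀ k : ℕ, (Δt)⁻¹ • (ut (k + 1) - u k)
        + A ((1/2 : ℝ) • (u k + ut (k + 1)))
        + B (F ((1/2 : ℝ) • (u k + ut (k + 1)))) = 0)
    (hscheme2 : ∀ k : ℕ, (Δt)⁻¹ • (ut (k + 1) - u (k + 1)) = V (u (k + 1))) :
    ∀ k : ℕ, (1/2 : ℝ) * ‖u (k + 1)‖ ^ 2 - (1/2 : ℝ) * ‖u k‖ ^ 2 =
      -Δt * ⟪B ((1/2 : ℝ) • (u k + ut (k + 1))), F ((1/2 : ℝ) • (u k + ut (k + 1)))⟫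
        - Δt * ‖sqrtV (u (k + 1))‖ ^ 2 - (Δt ^ 2 / 2) * ‖V (u (k + 1))‖ ^ 2 := by
  intro k
  have hmid := half_norm_sq_sub_of_midpoint_step F hΔt.ne' hA hBsa (hscheme1 k)
  have hvisc := half_norm_sq_of_viscosity_step V hΔt.ne' (hscheme2 k)
  linear_combination hmid - hvisc + Δt * hsqrtV (u (k + 1))

theorem stmt11 {X : Type*} [NormedAddCommGroup X] [InnerProductSpace ℝ X]
    [FiniteDimensional ℝ X]
    (A B V sqrtV : X →L[ℝ] X) (F : X → X) (Δt : ℝ) (hΔt : 0 < Δt)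
    (hA : ∀ x : X, ⟪A x, x⟫ = 0)
    (hBsa : ∀ x y : X, ⟪B x, y⟫ = ⟪x, B y⟫)
    (hBnn : ∀ x : X, 0 ≤ ⟪B x, x⟫)
    (hVsa : ∀ x y : X, ⟪V x, y⟫ = ⟪x, V y⟫)
    (hVpos : ∀ x : X, x ≠ 0 → 0 < ⟪V x, x⟫)
    (hsqrtV : ∀ x : X, ‖sqrtV x‖ ^ 2 = ⟪V x, x⟫)
    (u ut : ℕ → X)
    (hscheme1 : ∀ k : ℕ, (Δt)⁻¹ • (ut (k + 1) - u k)
        + A ((1/2 : ℝ) • (u k + ut (k + 1)))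
        + B (F ((1/2 : ℝ) • (u k + ut (k + 1)))) = 0)
    (hscheme2 : ∀ k : ℕ, (Δt)⁻¹ • (ut (k + 1) - u (k + 1)) = V (u (k + 1))) :
    ∀ k : ℕ, (1/2 : ℝ) * ‖u (k + 1)‖ ^ 2 - (1/2 : ℝ) * ‖u k‖ ^ 2 =
      -Δt * ⟪B ((1/2 : ℝ) • (u k + ut (k + 1))), F ((1/2 : ℝ) • (u k + ut (k + 1)))⟫
        - Δt * ‖sqrtV (u (k + 1))‖ ^ 2 - (Δt ^ 2 / 2) * ‖V (u (k + 1))‖ ^ 2 :=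
  stmt11_general A B V sqrtV F Δt hΔt hA hBsa hsqrtV u ut hscheme1 hscheme2
end

section
/- Under the midpoint scheme of the previous statement with the additional sign assumption ⟨v, B F(v)⟩ ≥ 0 for every v ∈ X, the discrete energy E_k = (1/2)‖u^k‖² is nonincreasing in k. -/
/-!
Taking the inner product of the midpoint step with `m_k = (u^k + ũ^{k+1})/2` turns the difference
quotient into `(‖ũ^{k+1}‖² - ‖u^k‖²) / (2Δt)`, while skew-adjointness of `A` and the sign
assumption on `B F` make the remaining terms nonnegative, so `‖ũ^{k+1}‖ ≤ ‖u^k‖`. The dissipative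
step reads `ũ^{k+1} = u^{k+1} + Δt V u^{k+1}` with `⟪V u^{k+1}, u^{k+1}⟫ ≥ 0`, so
`‖u^{k+1}‖ ≤ ‖ũ^{k+1}‖`.
-/

open RealInnerProductSpace

section

variable {X : Type*} [NormedAddCommGroup X] [InnerProductSpace ℝ X]

theorem real_inner_sub_add_eq_norm_sq_sub_norm_sq (a b : X) :
    ⟪b - a, b + a⟫ = ‖b‖ ^ 2 - ‖a‖ ^ 2 := by
  rw [inner_sub_left, inner_add_right, inner_add_right, real_inner_self_eq_norm_sq,
    real_inner_self_eq_norm_sq, real_inner_comm a b]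
  ring

theorem norm_le_norm_of_smul_sub_add_eq_zero {a b w : X} {t : ℝ} (ht : 0 < t)
    (hstep : t⁻¹ • (b - a) + w = 0) (hw : 0 ≤ ⟪w, (1 / 2 : ℝ) • (a + b)⟫) : ‖b‖ ≤ ‖a‖ := by
  have hba : b - a = t • -w := (inv_smul_eq_iff₀ ht.ne').1 (eq_neg_of_add_eq_zero_left hstep)
  have hw' : 0 ≤ ⟪w, b + a⟫ := by
    rw [real_inner_smul_right, add_comm a] at hw
    linarith
  have hsq : ‖b‖ ^ 2 ≤ ‖a‖ ^ 2 := by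
    rw [← sub_nonpos, ← real_inner_sub_add_eq_norm_sq_sub_norm_sq, hba, real_inner_smul_left,
      inner_neg_left, mul_neg, neg_nonpos]
    exact mul_nonneg ht.le hw'
  exact (pow_le_pow_iff_left₀ (norm_nonneg b) (norm_nonneg a) two_ne_zero).1 hsq

theorem norm_le_norm_add_of_real_inner_nonneg {c v : X} (h : 0 ≤ ⟪c, v⟫) : ‖c‖ ≤ ‖c + v‖ := by
  have hsq : ‖c‖ ^ 2 ≤ ‖c + v‖ ^ 2 := by
    rw [norm_add_sq_real]
    nlinarith [sq_nonneg ‖v‖]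
  exact (pow_le_pow_iff_left₀ (norm_nonneg c) (norm_nonneg _) two_ne_zero).1 hsq

end

theorem stmt12_general {X : Type*} [NormedAddCommGroup X] [InnerProductSpace ℝ X]
    (A B V : X →L[ℝ] X) (F : X → X) (Δt : ℝ) (hΔt : 0 < Δt)
    (hA : ∀ x : X, ⟪A x, x⟫ = 0)
    (hVpos : ∀ x : X, x ≠ 0 → 0 < ⟪V x, x⟫)
    (hsign : ∀ v : X, 0 ≤ ⟪v, B (F v)⟫)
    (u ut : ℕ → X)
    (hscheme1 : ∀ k : ℕ, (Δt)⁻¹ • (ut (k + 1) - u k)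
        + A ((1/2 : ℝ) • (u k + ut (k + 1)))
        + B (F ((1/2 : ℝ) • (u k + ut (k + 1)))) = 0)
    (hscheme2 : ∀ k : ℕ, (Δt)⁻¹ • (ut (k + 1) - u (k + 1)) = V (u (k + 1))) :
    ∀ k : ℕ, (1/2 : ℝ) * ‖u (k + 1)‖ ^ 2 ≤ (1/2 : ℝ) * ‖u k‖ ^ 2 := by
  intro k
  set m := (1 / 2 : ℝ) • (u k + ut (k + 1))
  have hmidpoint : ‖ut (k + 1)‖ ≤ ‖u k‖ := by
    refine norm_le_norm_of_smul_sub_add_eq_zero hΔt (w := A m + B (F m)) ?_ ?_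
    · rw [← add_assoc]; exact hscheme1 k
    · rw [inner_add_left, hA, real_inner_comm, zero_add]; exact hsign m
  have hdissipative : ‖u (k + 1)‖ ≤ ‖ut (k + 1)‖ := by
    set c := u (k + 1)
    have hut : ut (k + 1) = c + Δt • V c :=
      sub_eq_iff_eq_add'.1 ((inv_smul_eq_iff₀ hΔt.ne').1 (hscheme2 k))
    have hVc : 0 ≤ ⟪V c, c⟫ := by
      rcases eq_or_ne c 0 with hc | hc
      · simp [hc]
      · exact (hVpos c hc).le
    rw [hut]
    refine norm_le_norm_add_of_real_inner_nonneg ?_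
    rw [real_inner_smul_right, real_inner_comm]
    exact mul_nonneg hΔt.le hVc
  gcongr
  exact hdissipative.trans hmidpoint

theorem stmt12 {X : Type*} [NormedAddCommGroup X] [InnerProductSpace ℝ X]
    [FiniteDimensional ℝ X]
    (A B V : X →L[ℝ] X) (F : X → X) (Δt : ℝ) (hΔt : 0 < Δt)
    (hA : ∀ x : X, ⟪A x, x⟫ = 0)
    (hBsa : ∀ x y : X, ⟪B x, y⟫ = ⟪x, B y⟫)
    (hBnn : ∀ x : X, 0 ≤ ⟪B x, x⟫)
    (hVsa : ∀ x y : X, ⟪V x, y⟫ = ⟪x, V y⟫)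
    (hVpos : ∀ x : X, x ≠ 0 → 0 < ⟪V x, x⟫)
    (hsign : ∀ v : X, 0 ≤ ⟪v, B (F v)⟫)
    (u ut : ℕ → X)
    (hscheme1 : ∀ k : ℕ, (Δt)⁻¹ • (ut (k + 1) - u k)
        + A ((1/2 : ℝ) • (u k + ut (k + 1)))
        + B (F ((1/2 : ℝ) • (u k + ut (k + 1)))) = 0)
    (hscheme2 : ∀ k : ℕ, (Δt)⁻¹ • (ut (k + 1) - u (k + 1)) = V (u (k + 1))) :
    ∀ k : ℕ, (1/2 : ℝ) * ‖u (k + 1)‖ ^ 2 ≤ (1/2 : ℝ) * ‖u k‖ ^ 2 :=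
  stmt12_general A B V F Δt hΔt hA hVpos hsign u ut hscheme1 hscheme2
end

section
/- Let X be a finite-dimensional Hilbert space, A skew-adjoint, B self-adjoint nonnegative bounded, V positive self-adjoint on X, Δt > 0, N ∈ ℕ. Let (φ^k, φ̃^k) solve the viscous conservative midpoint scheme (φ̃^{k+1} − φ^k)/Δt + A((φ^k + φ̃^{k+1})/2) = 0, (φ̃^{k+1} − φ^{k+1})/Δt = V φ^{k+1}, and let (z^k, z̃^k) solve the damped scheme (z̃^{k+1} − z^k)/Δt + A((z^k + z̃^{k+1})/2) + B((z^k + z̃^{k+1})/2) = 0, (z̃^{k+1} − z^{k+1})/Δt = V z^{k+1}, with φ^0 = z^0. Setting θ^k = φ^k − z^k, θ̃^k = φ̃^k − z̃^k, one has for every k ≤ N: (1/2)‖θ^k‖² + Δt Σ_{i=0}^{k−1} ‖V^{1/2} θ^{i+1}‖² + (Δt²/2) Σ_{i=0}^{k−1} ‖V θ^{i+1}‖² = Δt Σ_{i=0}^{k−1} ⟨B((z^i + z̃^{i+1})/2), (θ^i + θ̃^{i+1})/2⟩. -/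
/-!
The difference `θ = φ - z` solves the viscous midpoint scheme forced by `B((zⁱ + z̃ⁱ⁺¹)/2)`.
Pairing the transport step with the midpoint `(θⁱ + θ̃ⁱ⁺¹)/2` kills the skew-adjoint term and
leaves `(‖θ̃ⁱ⁺¹‖² - ‖θⁱ‖²)/(2Δt)`; the viscous step `θ̃ⁱ⁺¹ = θⁱ⁺¹ + Δt V θⁱ⁺¹` expands
`‖θ̃ⁱ⁺¹‖²` into `‖θⁱ⁺¹‖² + 2Δt ‖V^{1/2} θⁱ⁺¹‖² + Δt² ‖V θⁱ⁺¹‖²`, and the sum telescopes.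
-/

open RealInnerProductSpace

section ViscousMidpoint

variable {X : Type*} [NormedAddCommGroup X] [InnerProductSpace ℝ X]

theorem norm_add_smul_sq_of_norm_sqrt_sq {V S : X →L[ℝ] X}
    (hS : ∀ x : X, ‖S x‖ ^ 2 = ⟪V x, x⟫) (t : ℝ) (w : X) :
    ‖w + t • V w‖ ^ 2 = ‖w‖ ^ 2 + 2 * t * ‖S w‖ ^ 2 + t ^ 2 * ‖V w‖ ^ 2 := by
  rw [norm_add_sq_real, real_inner_smul_right, norm_smul, mul_pow, Real.norm_eq_abs, sq_abs,
    hS, real_inner_comm]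
  ring

structure IsViscousMidpointSolution (A V : X →L[ℝ] X) (Δt : ℝ) (f u ut : ℕ → X) : Prop where
  transport : ∀ k, Δt⁻¹ • (ut (k + 1) - u k) + A ((1/2 : ℝ) • (u k + ut (k + 1))) = f k
  viscous : ∀ k, Δt⁻¹ • (ut (k + 1) - u (k + 1)) = V (u (k + 1))

namespace IsViscousMidpointSolution

variable {A V : X →L[ℝ] X} {Δt : ℝ} {f g u ut v vt : ℕ → X}

theorem sub (hu : IsViscousMidpointSolution A V Δt f u ut)
    (hv : IsViscousMidpointSolution A V Δt g v vt) :
    IsViscousMidpointSolution A V Δt (f - g) (u - v) (ut - vt) where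
  transport k := by
    simp only [Pi.sub_apply, ← hu.transport k, ← hv.transport k, map_smul, map_add, map_sub]
    module
  viscous k := by
    simp only [Pi.sub_apply, map_sub, ← hu.viscous k, ← hv.viscous k]
    module

theorem ut_eq (hu : IsViscousMidpointSolution A V Δt f u ut) (hΔt : Δt ≠ 0) (k : ℕ) :
    ut (k + 1) = u (k + 1) + Δt • V (u (k + 1)) := by
  rw [← hu.viscous k, smul_smul, mul_inv_cancel₀ hΔt, one_smul, add_sub_cancel]

theorem half_norm_sq_sub_eq_inner_forcing (hu : IsViscousMidpointSolution A V Δt f u ut)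
    (hA : ∀ x : X, ⟪A x, x⟫ = 0) (hΔt : Δt ≠ 0) (k : ℕ) :
    ‖ut (k + 1)‖ ^ 2 / 2 - ‖u k‖ ^ 2 / 2
      = Δt * ⟪f k, (1/2 : ℝ) • (u k + ut (k + 1))⟫ := by
  have hdiff : ⟪ut (k + 1) - u k, u k + ut (k + 1)⟫ = ‖ut (k + 1)‖ ^ 2 - ‖u k‖ ^ 2 := by
    rw [inner_sub_left, inner_add_right, inner_add_right, real_inner_self_eq_norm_sq,
      real_inner_self_eq_norm_sq, real_inner_comm (ut (k + 1))]
    ring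
  rw [← hu.transport k, inner_add_left, hA, add_zero, real_inner_smul_left,
    real_inner_smul_right, hdiff]
  field_simp

theorem energy_step (hu : IsViscousMidpointSolution A V Δt f u ut)
    (hA : ∀ x : X, ⟪A x, x⟫ = 0) (hΔt : Δt ≠ 0) {S : X →L[ℝ] X}
    (hS : ∀ x : X, ‖S x‖ ^ 2 = ⟪V x, x⟫) (i : ℕ) :
    (1/2 : ℝ) * ‖u (i + 1)‖ ^ 2 - (1/2 : ℝ) * ‖u i‖ ^ 2
        + (Δt * ‖S (u (i + 1))‖ ^ 2 + (Δt ^ 2 / 2) * ‖V (u (i + 1))‖ ^ 2)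
      = Δt * ⟪f i, (1/2 : ℝ) • (u i + ut (i + 1))⟫ := by
  rw [← hu.half_norm_sq_sub_eq_inner_forcing hA hΔt, hu.ut_eq hΔt,
    norm_add_smul_sq_of_norm_sqrt_sq hS]
  ring

theorem energy_identity (hu : IsViscousMidpointSolution A V Δt f u ut)
    (hA : ∀ x : X, ⟪A x, x⟫ = 0) (hΔt : Δt ≠ 0) {S : X →L[ℝ] X}
    (hS : ∀ x : X, ‖S x‖ ^ 2 = ⟪V x, x⟫) (k : ℕ) :
    (1/2 : ℝ) * ‖u k‖ ^ 2
        + Δt * ∑ i ∈ Finset.range k, ‖S (u (i + 1))‖ ^ 2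
        + (Δt ^ 2 / 2) * ∑ i ∈ Finset.range k, ‖V (u (i + 1))‖ ^ 2
      = (1/2 : ℝ) * ‖u 0‖ ^ 2
        + Δt * ∑ i ∈ Finset.range k, ⟪f i, (1/2 : ℝ) • (u i + ut (i + 1))⟫ := by
  have htelescope := Finset.sum_range_sub (fun i => (1/2 : ℝ) * ‖u i‖ ^ 2) k
  simp only [Finset.mul_sum, ← Finset.sum_congr rfl fun i _ => hu.energy_step hA hΔt hS i,
    Finset.sum_add_distrib, htelescope]
  ring

end IsViscousMidpointSolution

end ViscousMidpoint

theorem stmt13_general {X : Type*} [NormedAddCommGroup X] [InnerProductSpace ℝ X]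
    (A B V sqrtV : X →L[ℝ] X) (Δt : ℝ) (hΔt : 0 < Δt) (N : ℕ)
    (hA : ∀ x : X, ⟪A x, x⟫ = 0)
    (hsqrtV : ∀ x : X, ‖sqrtV x‖ ^ 2 = ⟪V x, x⟫)
    (φ φt z zt : ℕ → X)
    (hφ1 : ∀ k : ℕ, (Δt)⁻¹ • (φt (k + 1) - φ k)
        + A ((1/2 : ℝ) • (φ k + φt (k + 1))) = 0)
    (hφ2 : ∀ k : ℕ, (Δt)⁻¹ • (φt (k + 1) - φ (k + 1)) = V (φ (k + 1)))
    (hz1 : ∀ k : ℕ, (Δt)⁻¹ • (zt (k + 1) - z k)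
        + A ((1/2 : ℝ) • (z k + zt (k + 1)))
        + B ((1/2 : ℝ) • (z k + zt (k + 1))) = 0)
    (hz2 : ∀ k : ℕ, (Δt)⁻¹ • (zt (k + 1) - z (k + 1)) = V (z (k + 1)))
    (h0 : φ 0 = z 0) :
    ∀ k ≤ N, (1/2 : ℝ) * ‖φ k - z k‖ ^ 2
        + Δt * ∑ i ∈ Finset.range k, ‖sqrtV (φ (i + 1) - z (i + 1))‖ ^ 2
        + (Δt ^ 2 / 2) * ∑ i ∈ Finset.range k, ‖V (φ (i + 1) - z (i + 1))‖ ^ 2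
      = Δt * ∑ i ∈ Finset.range k,
          ⟪B ((1/2 : ℝ) • (z i + zt (i + 1))),
            (1/2 : ℝ) • ((φ i - z i) + (φt (i + 1) - zt (i + 1)))⟫ := by
  intro k _
  have hφ : IsViscousMidpointSolution A V Δt 0 φ φt := ⟨hφ1, hφ2⟩
  have hz : IsViscousMidpointSolution A V Δt (fun i => -B ((1/2 : ℝ) • (z i + zt (i + 1)))) z zt :=
    ⟨fun k => eq_neg_of_add_eq_zero_left (hz1 k), hz2⟩
  have hθ := (hφ.sub hz).energy_identity hA hΔt.ne' hsqrtV k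
  simpa [h0] using hθ

theorem stmt13 {X : Type*} [NormedAddCommGroup X] [InnerProductSpace ℝ X]
    [FiniteDimensional ℝ X]
    (A B V sqrtV : X →L[ℝ] X) (Δt : ℝ) (hΔt : 0 < Δt) (N : ℕ)
    (hA : ∀ x : X, ⟪A x, x⟫ = 0)
    (hBsa : ∀ x y : X, ⟪B x, y⟫ = ⟪x, B y⟫)
    (hBnn : ∀ x : X, 0 ≤ ⟪B x, x⟫)
    (hVsa : ∀ x y : X, ⟪V x, y⟫ = ⟪x, V y⟫)
    (hVpos : ∀ x : X, x ≠ 0 → 0 < ⟪V x, x⟫)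
    (hsqrtV : ∀ x : X, ‖sqrtV x‖ ^ 2 = ⟪V x, x⟫)
    (φ φt z zt : ℕ → X)
    (hφ1 : ∀ k : ℕ, (Δt)⁻¹ • (φt (k + 1) - φ k)
        + A ((1/2 : ℝ) • (φ k + φt (k + 1))) = 0)
    (hφ2 : ∀ k : ℕ, (Δt)⁻¹ • (φt (k + 1) - φ (k + 1)) = V (φ (k + 1)))
    (hz1 : ∀ k : ℕ, (Δt)⁻¹ • (zt (k + 1) - z k)
        + A ((1/2 : ℝ) • (z k + zt (k + 1)))
        + B ((1/2 : ℝ) • (z k + zt (k + 1))) = 0)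
    (hz2 : ∀ k : ℕ, (Δt)⁻¹ • (zt (k + 1) - z (k + 1)) = V (z (k + 1)))
    (h0 : φ 0 = z 0) :
    ∀ k ≤ N, (1/2 : ℝ) * ‖φ k - z k‖ ^ 2
        + Δt * ∑ i ∈ Finset.range k, ‖sqrtV (φ (i + 1) - z (i + 1))‖ ^ 2
        + (Δt ^ 2 / 2) * ∑ i ∈ Finset.range k, ‖V (φ (i + 1) - z (i + 1))‖ ^ 2
      = Δt * ∑ i ∈ Finset.range k,
          ⟪B ((1/2 : ℝ) • (z i + zt (i + 1))),
            (1/2 : ℝ) • ((φ i - z i) + (φt (i + 1) - zt (i + 1)))⟫ :=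
  stmt13_general A B V sqrtV Δt hΔt N hA hsqrtV φ φt z zt hφ1 hφ2 hz1 hz2 h0
end

section
/- Let M : [0, s₀²] → [0,∞) be continuous, increasing, with M(0) = 0 and M(x) > 0 for x > 0, and let ρ ∈ (0,1). Let (E_k)_{k∈ℕ} be a nonincreasing sequence in [0, s₀²] satisfying E_{k+1} − E_k + ρ M(E_k) ≤ 0 for all k. Then for every p ∈ ℕ and every ℓ ∈ {0, …, p}, M(E_p) ≤ (1/ρ) · K_r^{-1}(ρ(p − ℓ))/(ℓ + 1), where r = E_0 and K_r(τ) = ∫_τ^r dy/M(y) for 0 < τ ≤ r (K_r is decreasing, K_r(r) = 0, and K_r^{-1} denotes its inverse). -/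
/-!
Summing the one-step inequality over the `ℓ + 1` steps ending at `p`, and bounding every
`M (E k)` from below by `M (E p)`, gives `ρ (ℓ + 1) M (E p) ≤ E (p - ℓ)`. On the other hand,
each step satisfies `ρ ≤ (E k - E (k + 1)) / M (E k) ≤ ∫_{E (k+1)}^{E k} dy / M y` because `1 / M`
is decreasing, so `ρ m ≤ K (E m)`, i.e. `E m ≤ K⁻¹ (ρ m)`. Take `m = p - ℓ`.
-/

open Set MeasureTheory

section

variable {M : ℝ → ℝ} {a b : ℝ}

lemma antitoneOn_one_div_of_monotoneOn {s : Set ℝ} (hM : MonotoneOn M s)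
    (hpos : ∀ x ∈ s, 0 < M x) : AntitoneOn (fun y => 1 / M y) s :=
  fun _ hx _ hy hxy => one_div_le_one_div_of_le (hpos _ hx) (hM hx hy hxy)

lemma intervalIntegrable_one_div_of_monotoneOn {s : Set ℝ} (hab : a ≤ b) (hs : Icc a b ⊆ s)
    (hM : MonotoneOn M s) (hpos : ∀ x ∈ s, 0 < M x) :
    IntervalIntegrable (fun y => 1 / M y) volume a b := by
  rw [← uIcc_of_le hab] at hs
  exact (antitoneOn_one_div_of_monotoneOn hM hpos).mono hs |>.intervalIntegrable

lemma div_le_integral_one_div_of_monotoneOn {s : Set ℝ} (hab : a ≤ b) (hs : Icc a b ⊆ s)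
    (hM : MonotoneOn M s) (hpos : ∀ x ∈ s, 0 < M x) :
    (b - a) / M b ≤ ∫ y in a..b, 1 / M y := by
  have hmono : ∀ y ∈ Icc a b, 1 / M b ≤ 1 / M y := fun y hy =>
    antitoneOn_one_div_of_monotoneOn hM hpos (hs hy) (hs (right_mem_Icc.2 hab)) hy.2
  have := intervalIntegral.integral_mono_on hab intervalIntegrable_const
    (intervalIntegrable_one_div_of_monotoneOn hab hs hM hpos) hmono
  rwa [intervalIntegral.integral_const, smul_eq_mul, mul_one_div] at this

end

section

variable {M : ℝ → ℝ} {E : ℕ → ℝ} {ρ : ℝ}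

lemma add_mul_succ_le_of_step {s : Set ℝ} (hρ : 0 ≤ ρ) (hM : MonotoneOn M s)
    (hEs : ∀ k, E k ∈ s) (hE : Antitone E) (hstep : ∀ k, E (k + 1) - E k + ρ * M (E k) ≤ 0)
    (n ℓ : ℕ) : E (n + ℓ + 1) + ρ * (ℓ + 1) * M (E (n + ℓ)) ≤ E n := by
  induction ℓ with
  | zero => simpa using (by linarith [hstep n] : E (n + 1) + ρ * M (E n) ≤ E n)
  | succ ℓ ih =>
    have hMle : M (E (n + ℓ + 1)) ≤ M (E (n + ℓ)) :=
      hM (hEs _) (hEs _) (hE (Nat.le_succ _))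
    have := mul_le_mul_of_nonneg_left hMle (by positivity : 0 ≤ ρ * (ℓ + 1))
    push_cast
    rw [← add_assoc]
    linarith [hstep (n + ℓ + 1)]

lemma mul_le_integral_one_div_of_step (hM : MonotoneOn M (Ioc 0 (E 0)))
    (hMpos : ∀ x ∈ Ioc 0 (E 0), 0 < M x) (hE : Antitone E)
    (hstep : ∀ k, E (k + 1) - E k + ρ * M (E k) ≤ 0) :
    ∀ m : ℕ, 0 < E m → ρ * m ≤ ∫ y in E m..E 0, 1 / M y
  | 0, _ => by simp
  | n + 1, hpos => by
    have hle : E (n + 1) ≤ E n := hE (Nat.le_succ n)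
    have hEn : 0 < E n := hpos.trans_le hle
    have hIcc : ∀ {a b}, 0 < a → b ≤ E 0 → Icc a b ⊆ Ioc 0 (E 0) := fun ha hb _ hx =>
      ⟨ha.trans_le hx.1, hx.2.trans hb⟩
    have hlast := hIcc hpos (hE n.zero_le)
    have hstep_le : ρ ≤ (E n - E (n + 1)) / M (E n) := by
      rw [le_div_iff₀ (hMpos _ (hlast ⟨hle, le_rfl⟩))]
      linarith [hstep n]
    have hint := div_le_integral_one_div_of_monotoneOn hle hlast hM hMpos
    rw [← intervalIntegral.integral_add_adjacent_intervals
      (intervalIntegrable_one_div_of_monotoneOn hle hlast hM hMpos)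
      (intervalIntegrable_one_div_of_monotoneOn (hE n.zero_le) (hIcc hEn le_rfl) hM hMpos)]
    push_cast
    linarith [mul_le_integral_one_div_of_step hM hMpos hE hstep n hEn]

lemma le_inv_of_step (hρ : 0 ≤ ρ) (hM : MonotoneOn M (Ioc 0 (E 0)))
    (hMpos : ∀ x ∈ Ioc 0 (E 0), 0 < M x) (hE : Antitone E) (hE0 : ∀ k, 0 ≤ E k)
    (hstep : ∀ k, E (k + 1) - E k + ρ * M (E k) ≤ 0) {Kinv : ℝ → ℝ}
    (hKinv : ∀ τ ∈ Ioc 0 (E 0), Kinv (∫ y in τ..E 0, 1 / M y) = τ) (hKinv_anti : Antitone Kinv)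
    (hdom : ∀ t ≥ 0, ∃ τ ∈ Ioc 0 (E 0), ∫ y in τ..E 0, 1 / M y = t) (m : ℕ) :
    E m ≤ Kinv (ρ * m) := by
  rcases (hE0 m).lt_or_eq with hpos | hzero
  · calc E m = Kinv (∫ y in E m..E 0, 1 / M y) := (hKinv _ ⟨hpos, hE m.zero_le⟩).symm
      _ ≤ Kinv (ρ * m) := hKinv_anti (mul_le_integral_one_div_of_step hM hMpos hE hstep m hpos)
  · obtain ⟨τ, hτ, hKτ⟩ := hdom (ρ * m) (by positivity)
    rw [← hzero, ← hKτ, hKinv τ hτ]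
    exact hτ.1.le

end

theorem stmt19_general (s₀ ρ : ℝ) (hρ : ρ ∈ Set.Ioo (0:ℝ) 1)
    (M : ℝ → ℝ)
    (hMmono : StrictMonoOn M (Set.Icc 0 (s₀ ^ 2)))
    (hMpos : ∀ x ∈ Set.Ioc (0:ℝ) (s₀ ^ 2), 0 < M x)
    (E : ℕ → ℝ) (hEanti : Antitone E) (hErange : ∀ k, E k ∈ Set.Icc (0:ℝ) (s₀ ^ 2))
    (hstep : ∀ k, E (k + 1) - E k + ρ * M (E k) ≤ 0)
    (Kinv : ℝ → ℝ)
    (hKinv : ∀ τ ∈ Set.Ioc (0:ℝ) (E 0), Kinv (∫ y in τ..(E 0), 1 / M y) = τ)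
    (hKinv_anti : Antitone Kinv)
    (hdom : ∀ t ≥ (0:ℝ), ∃ τ ∈ Set.Ioc (0:ℝ) (E 0), (∫ y in τ..(E 0), 1 / M y) = t) :
    ∀ p ℓ : ℕ, ℓ ≤ p →
      M (E p) ≤ (1 / ρ) * Kinv (ρ * ((p : ℝ) - (ℓ : ℝ))) / ((ℓ : ℝ) + 1) := by
  intro p ℓ hℓ
  obtain ⟨n, rfl⟩ := Nat.exists_eq_add_of_le' hℓ
  have hM := hMmono.monotoneOn
  have hE0 : E 0 ≤ s₀ ^ 2 := (hErange 0).2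
  have hsum := add_mul_succ_le_of_step hρ.1.le hM hErange hEanti hstep n ℓ
  have hdecay := le_inv_of_step hρ.1.le
    (hM.mono (Ioc_subset_Icc_self.trans (Icc_subset_Icc_right hE0)))
    (fun x hx => hMpos x ⟨hx.1, hx.2.trans hE0⟩) hEanti (fun k => (hErange k).1) hstep hKinv
    hKinv_anti hdom n
  rw [Nat.cast_add, add_sub_cancel_right, one_div_mul_eq_div, div_div,
    le_div_iff₀ (mul_pos hρ.1 ℓ.cast_add_one_pos)]
  linarith [(hErange (n + ℓ + 1)).1]

theorem stmt19 (s₀ ρ : ℝ) (hs₀ : 0 < s₀) (hρ : ρ ∈ Set.Ioo (0:ℝ) 1)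
    (M : ℝ → ℝ) (hMcont : ContinuousOn M (Set.Icc 0 (s₀ ^ 2)))
    (hMmono : StrictMonoOn M (Set.Icc 0 (s₀ ^ 2))) (hM0 : M 0 = 0)
    (hMpos : ∀ x ∈ Set.Ioc (0:ℝ) (s₀ ^ 2), 0 < M x)
    (E : ℕ → ℝ) (hEanti : Antitone E) (hErange : ∀ k, E k ∈ Set.Icc (0:ℝ) (s₀ ^ 2))
    (hstep : ∀ k, E (k + 1) - E k + ρ * M (E k) ≤ 0)
    (Kinv : ℝ → ℝ)
    (hKinv : ∀ τ ∈ Set.Ioc (0:ℝ) (E 0), Kinv (∫ y in τ..(E 0), 1 / M y) = τ)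
    (hKinv_anti : Antitone Kinv)
    (hdom : ∀ t ≥ (0:ℝ), ∃ τ ∈ Set.Ioc (0:ℝ) (E 0), (∫ y in τ..(E 0), 1 / M y) = t) :
    ∀ p ℓ : ℕ, ℓ ≤ p →
      M (E p) ≤ (1 / ρ) * Kinv (ρ * ((p : ℝ) - (ℓ : ℝ))) / ((ℓ : ℝ) + 1) :=
  stmt19_general s₀ ρ hρ M hMmono hMpos E hEanti hErange hstep Kinv hKinv hKinv_anti hdom
end
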